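/- Let Λ be an invertible skew-symmetric n×n complex matrix and A a symmetric n×n complex matrix. If tan(iΛA) is defined (cos(iΛA) invertible), then the matrix (Λ^{-1}/i)·tan(iΛA) is symmetric. -/

import Mathlib

open Matrix NormedSpace

attribute [local instance] Matrix.linftyOpNormedRing Matrix.linftyOpNormedAlgebra

/-- The Cayley transform `C(X) = (1 − X)(1 + X)⁻¹`. -/
noncomputable def cayley {n : ℕ} (X : Matrix (Fin n) (Fin n) ℂ) : Matrix (Fin n) (Fin n) ℂ :=
  (1 - X) * (1 + X)⁻¹

/-- Matrix cosine `cos(a) = (e^{ia} + e^{−ia})/2`. -/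
noncomputable def matCos {n : ℕ} (a : Matrix (Fin n) (Fin n) ℂ) : Matrix (Fin n) (Fin n) ℂ :=
  (2 : ℂ)⁻¹ • (exp (Complex.I • a) + exp ((-Complex.I) • a))

/-- Matrix sine `sin(a) = (e^{ia} − e^{−ia})/(2i)`. -/
noncomputable def matSin {n : ℕ} (a : Matrix (Fin n) (Fin n) ℂ) : Matrix (Fin n) (Fin n) ℂ :=
  (2 * Complex.I)⁻¹ • (exp (Complex.I • a) - exp ((-Complex.I) • a))

/-- Matrix tangent `tan(a) = sin(a)·cos(a)⁻¹`, defined when `cos(a)` is invertible. -/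
noncomputable def matTan {n : ℕ} (a : Matrix (Fin n) (Fin n) ℂ) : Matrix (Fin n) (Fin n) ℂ :=
  matSin a * (matCos a)⁻¹

/-!
The function `f = tan` commutes with transposition, is odd, and is equivariant under
conjugation. Writing `X = iΛA = Λ (iA)`, we get `Xᵀ = -(iA)Λ`, so
`(Λ⁻¹ f(X))ᵀ = f(Xᵀ) (Λ⁻¹)ᵀ = -f((iA)Λ) · (-Λ⁻¹) = f((iA)Λ) Λ⁻¹`, while conjugating
`Λ (iA) = Λ ((iA)Λ) Λ⁻¹` gives `Λ⁻¹ f(X) = f((iA)Λ) Λ⁻¹` as well.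
-/

/-- For singular `b` this holds because the junk value `b⁻¹ = 0` commutes with everything. -/
theorem Matrix.Commute.nonsing_inv_right {m R : Type*} [Fintype m] [DecidableEq m] [CommRing R]
    {a b : Matrix m m R} (h : Commute a b) : Commute a b⁻¹ := by
  rw [nonsing_inv_eq_ringInverse]
  by_cases hb : IsUnit b
  · obtain ⟨u, rfl⟩ := hb
    rw [Ring.inverse_unit]
    exact h.units_inv_right
  · rw [Ring.inverse_non_unit _ hb]
    exact Commute.zero_right a

theorem Matrix.nonsing_inv_transpose_of_transpose_eq_neg {m R : Type*} [Fintype m]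
    [DecidableEq m] [CommRing R] {Λ : Matrix m m R} (hΛ : IsUnit Λ.det) (hskew : Λᵀ = -Λ) :
    Λ⁻¹ᵀ = -Λ⁻¹ := by
  rw [transpose_nonsing_inv, hskew]
  exact inv_eq_left_inv (by rw [neg_mul_neg, nonsing_inv_mul Λ hΛ])

section Trigonometric

variable {n : ℕ}

theorem exp_smul_conj {P : Matrix (Fin n) (Fin n) ℂ} (hP : IsUnit P.det) (c : ℂ)
    (X : Matrix (Fin n) (Fin n) ℂ) : exp (c • (P * X * P⁻¹)) = P * exp (c • X) * P⁻¹ := by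
  rw [show c • (P * X * P⁻¹) = P * (c • X) * P⁻¹ by rw [Matrix.mul_smul, Matrix.smul_mul]]
  exact Matrix.exp_units_conj (nonsingInvUnit P hP) _

theorem matSin_transpose (X : Matrix (Fin n) (Fin n) ℂ) : matSin Xᵀ = (matSin X)ᵀ := by
  simp only [matSin, ← Matrix.exp_transpose, Matrix.transpose_sub,
    Matrix.transpose_smul]

theorem matCos_transpose (X : Matrix (Fin n) (Fin n) ℂ) : matCos Xᵀ = (matCos X)ᵀ := by
  simp only [matCos, ← Matrix.exp_transpose, Matrix.transpose_add,
    Matrix.transpose_smul]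

theorem matSin_neg (X : Matrix (Fin n) (Fin n) ℂ) : matSin (-X) = -matSin X := by
  rw [matSin, matSin, neg_smul_neg, smul_neg, ← neg_smul Complex.I X, ← smul_neg, neg_sub]

theorem matCos_neg (X : Matrix (Fin n) (Fin n) ℂ) : matCos (-X) = matCos X := by
  rw [matCos, matCos, neg_smul_neg, smul_neg, ← neg_smul Complex.I X, add_comm]

theorem matSin_conj {P : Matrix (Fin n) (Fin n) ℂ} (hP : IsUnit P.det)
    (X : Matrix (Fin n) (Fin n) ℂ) : matSin (P * X * P⁻¹) = P * matSin X * P⁻¹ := by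
  rw [matSin, matSin, exp_smul_conj hP, exp_smul_conj hP, Matrix.mul_smul, Matrix.smul_mul,
    mul_sub, sub_mul]

theorem matCos_conj {P : Matrix (Fin n) (Fin n) ℂ} (hP : IsUnit P.det)
    (X : Matrix (Fin n) (Fin n) ℂ) : matCos (P * X * P⁻¹) = P * matCos X * P⁻¹ := by
  rw [matCos, matCos, exp_smul_conj hP, exp_smul_conj hP, Matrix.mul_smul, Matrix.smul_mul,
    mul_add, add_mul]

theorem commute_matSin_matCos (X : Matrix (Fin n) (Fin n) ℂ) :
    Commute (matSin X) (matCos X) := by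
  have h : Commute (exp (Complex.I • X)) (exp ((-Complex.I) • X)) :=
    Commute.exp (by rw [neg_smul]; exact (Commute.refl _).neg_right)
  exact ((((Commute.refl _).add_right h).sub_left
    (h.symm.add_right (Commute.refl _))).smul_left _).smul_right _

theorem matTan_transpose (X : Matrix (Fin n) (Fin n) ℂ) : matTan Xᵀ = (matTan X)ᵀ := by
  rw [matTan, matTan, transpose_mul, Matrix.transpose_nonsing_inv, ← matSin_transpose,
    ← matCos_transpose]
  exact (commute_matSin_matCos Xᵀ).nonsing_inv_right.eq

theorem matTan_neg (X : Matrix (Fin n) (Fin n) ℂ) : matTan (-X) = -matTan X := by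
  rw [matTan, matTan, matSin_neg, matCos_neg, neg_mul]

theorem matTan_conj {P : Matrix (Fin n) (Fin n) ℂ} (hP : IsUnit P.det)
    (X : Matrix (Fin n) (Fin n) ℂ) : matTan (P * X * P⁻¹) = P * matTan X * P⁻¹ := by
  rw [matTan, matTan, matSin_conj hP, matCos_conj hP, Matrix.mul_inv_rev, Matrix.mul_inv_rev,
    nonsing_inv_nonsing_inv P hP]
  simp only [mul_assoc, Matrix.nonsing_inv_mul_cancel_left P _ hP]

theorem nonsing_inv_mul_matTan_mul {Λ : Matrix (Fin n) (Fin n) ℂ} (hΛ : IsUnit Λ.det)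
    (B : Matrix (Fin n) (Fin n) ℂ) : Λ⁻¹ * matTan (Λ * B) = matTan (B * Λ) * Λ⁻¹ := by
  have hconj : Λ * B = Λ * (B * Λ) * Λ⁻¹ := by
    rw [← mul_assoc, Matrix.mul_nonsing_inv_cancel_right Λ _ hΛ]
  rw [hconj, matTan_conj hΛ, mul_assoc, Matrix.nonsing_inv_mul_cancel_left Λ _ hΛ]

end Trigonometric

theorem tan_quadratic_symm_general {n : ℕ} (Λ A : Matrix (Fin n) (Fin n) ℂ)
    (hΛinv : IsUnit Λ.det) (hΛskew : Λᵀ = -Λ) (hA : Aᵀ = A) :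
    (Complex.I⁻¹ • (Λ⁻¹ * matTan (Complex.I • (Λ * A))))ᵀ =
      Complex.I⁻¹ • (Λ⁻¹ * matTan (Complex.I • (Λ * A))) := by
  set B := Complex.I • A
  have hX : Complex.I • (Λ * A) = Λ * B := (Matrix.mul_smul Λ Complex.I A).symm
  have hXT : (Λ * B)ᵀ = -(B * Λ) := by
    rw [transpose_mul, transpose_smul, hA, hΛskew, mul_neg]
  rw [hX, transpose_smul, transpose_mul, ← matTan_transpose, hXT, matTan_neg,
    nonsing_inv_transpose_of_transpose_eq_neg hΛinv hΛskew, neg_mul_neg,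
    nonsing_inv_mul_matTan_mul hΛinv]

/-- For `Λ` invertible skew-symmetric and `A` symmetric, with `cos(iΛA)`
invertible, the matrix `(Λ⁻¹/i)·tan(iΛA)` is symmetric. -/
theorem tan_quadratic_symm {n : ℕ} (Λ A : Matrix (Fin n) (Fin n) ℂ)
    (hΛinv : IsUnit Λ.det) (hΛskew : Λᵀ = -Λ) (hA : Aᵀ = A)
    (hcos : IsUnit (matCos (Complex.I • (Λ * A))).det) :
    (Complex.I⁻¹ • (Λ⁻¹ * matTan (Complex.I • (Λ * A))))ᵀ =
      Complex.I⁻¹ • (Λ⁻¹ * matTan (Complex.I • (Λ * A))) :=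
  tan_quadratic_symm_general Λ A hΛinv hΛskew hA
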